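/- Let 1 < p < ∞. On the interval (0,π_p/2), the function sin_p is differentiable with sin_p′(x) = cos_p(x), the function x ↦ (cos_p(x))^{p−1} is differentiable with derivative −(p−1)·(sin_p(x))^{p−1}, and consequently u = sin_p satisfies the equation (|u′|^{p−2}u′)′(x) + (p−1)|u(x)|^{p−2}u(x) = 0 for all x ∈ (0,π_p/2), together with sin_p(0) = 0 and sin_p′(0⁺) = 1 (i.e., cos_p(0) = 1). -/

import Mathlib

/-- `arcsin_p x = ∫₀ˣ (1 - tᵖ)^(-1/p) dt`. -/
noncomputable def arcsinP (p x : ℝ) : ℝ := ∫ t in (0:ℝ)..x, (1 - t ^ p) ^ (-(1 / p))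

/-- The generalized π: `π_p = 2 arcsin_p 1`. -/
noncomputable def piP (p : ℝ) : ℝ := 2 * arcsinP p 1

/-- `sin_p` on `[0, π_p/2]`, defined as the inverse of `arcsin_p : [0,1] → [0, π_p/2]`. -/
noncomputable def sinPHalf (p : ℝ) : ℝ → ℝ := Function.invFunOn (arcsinP p) (Set.Icc 0 1)

/-- `sin_p` on `[0, π_p]`, extended by `sin_p x = sin_p (π_p - x)`. -/
noncomputable def sinP (p x : ℝ) : ℝ :=
  if x ≤ piP p / 2 then sinPHalf p x else sinPHalf p (piP p - x)

/-- `cos_p x = (1 - sin_p x ^ p)^(1/p)` on `[0, π_p/2]`, with minus sign on `[π_p/2, π_p]`. -/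
noncomputable def cosP (p x : ℝ) : ℝ :=
  if x ≤ piP p / 2 then (1 - sinP p x ^ p) ^ (1 / p)
  else -((1 - sinP p x ^ p) ^ (1 / p))

/-- `cot_p x = cos_p x / sin_p x`. -/
noncomputable def cotP (p x : ℝ) : ℝ := cosP p x / sinP p x

/-!
The integrand `(1 - t^p)^(-1/p)` is positive on `(0,1)` and, since `1 - t^p ≥ 1 - t` and
`-1/p > -1`, integrable up to `t = 1`. Hence `arcsin_p` is a continuous strictly increasing
bijection `[0,1] → [0, π_p/2]`, differentiable on `(0,1)` with nonzero derivative, and the inverse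
function theorem gives `sin_p' = (1 - sin_p^p)^(1/p) = cos_p`. Writing
`cos_p^(p-1) = (1 - sin_p^p)^((p-1)/p)`, the chain rule gives
`(cos_p^(p-1))' = -(p-1) sin_p^(p-1) · cos_p · (1 - sin_p^p)^(-1/p) = -(p-1) sin_p^(p-1)`.
On `(0, π_p/2)` both `sin_p` and `cos_p` are positive, so `|u|^(p-2) u = u^(p-1)` there.
-/

open Set Real MeasureTheory

theorem StrictMonoOn.strictMonoOn_of_rightInvOn {α β : Type*} [LinearOrder α] [LinearOrder β]
    {f : α → β} {g : β → α} {s : Set α} {t : Set β} (hf : StrictMonoOn f s)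
    (hfg : RightInvOn g f t) (hg : MapsTo g t s) : StrictMonoOn g t := by
  intro y₁ hy₁ y₂ hy₂ hlt
  by_contra! hle
  have := hf.monotoneOn (hg hy₂) (hg hy₁) hle
  rw [hfg hy₁, hfg hy₂] at this
  exact hlt.not_ge this

lemma abs_rpow_sub_two_mul_self {a : ℝ} (ha : 0 < a) (p : ℝ) :
    |a| ^ (p - 2) * a = a ^ (p - 1) := by
  rw [abs_of_pos ha, ← rpow_add_one ha.ne']
  ring_nf

lemma HasDerivAt.one_sub_rpow_rpow_div {u : ℝ → ℝ} {p x : ℝ} (hp : p ≠ 0) (hux : u x ≠ 0)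
    (hux1 : u x ^ p < 1) (hu : HasDerivAt u ((1 - u x ^ p) ^ (1 / p)) x) :
    HasDerivAt (fun y => (1 - u y ^ p) ^ ((p - 1) / p)) (-((p - 1) * u x ^ (p - 1))) x := by
  have hw : 0 < 1 - u x ^ p := by linarith
  have hchain := ((hu.rpow_const (p := p) (Or.inl hux)).const_sub 1).rpow_const
    (p := (p - 1) / p) (Or.inl hw.ne')
  convert hchain using 1
  have hexp : (p - 1) / p - 1 = -(1 / p) := by field_simp; ring
  have hcancel : (1 - u x ^ p) ^ (1 / p) * (1 - u x ^ p) ^ (-(1 / p)) = 1 := by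
    rw [← rpow_add hw, add_neg_cancel, rpow_zero]
  rw [hexp]
  field_simp
  linear_combination (p - 1) * u x ^ (p - 1) * hcancel

section arcsinP

variable {p : ℝ}

lemma measurable_arcsinP_integrand (p : ℝ) :
    Measurable fun t : ℝ => (1 - t ^ p) ^ (-(1 / p)) := by
  fun_prop

lemma intervalIntegrable_arcsinP_integrand (hp : 1 < p) :
    IntervalIntegrable (fun t : ℝ => (1 - t ^ p) ^ (-(1 / p))) volume 0 1 := by
  have hp0 : 0 < p := one_pos.trans hp
  have hdom : IntervalIntegrable (fun t : ℝ => (1 - t) ^ (-(1 / p))) volume 0 1 := by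
    have hexp : -1 < -(1 / p) := neg_lt_neg ((div_lt_one hp0).2 hp)
    simpa using ((intervalIntegral.intervalIntegrable_rpow' (a := 0) (b := 1) hexp).comp_sub_left
      1).symm
  refine hdom.mono_fun (measurable_arcsinP_integrand p).aestronglyMeasurable
    (ae_restrict_of_forall_mem measurableSet_uIoc fun t ht => ?_)
  rw [uIoc_of_le zero_le_one] at ht
  have htp : t ^ p ≤ t := by
    simpa using rpow_le_rpow_of_exponent_ge ht.1 ht.2 hp.le
  have hw : 0 ≤ 1 - t ^ p := by linarith [ht.2]
  dsimp only
  rw [Real.norm_of_nonneg (rpow_nonneg hw _),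
    Real.norm_of_nonneg (rpow_nonneg (sub_nonneg.2 ht.2) _)]
  rcases (sub_nonneg.2 ht.2).eq_or_lt with ht1 | ht1
  · rw [← sub_eq_zero.1 ht1.symm, one_rpow]
  · exact rpow_le_rpow_of_nonpos ht1 (by linarith) (by simp [hp0.le])

lemma intervalIntegrable_arcsinP_integrand_of_mem (hp : 1 < p) {a b : ℝ} (ha : a ∈ Icc (0 : ℝ) 1)
    (hb : b ∈ Icc (0 : ℝ) 1) :
    IntervalIntegrable (fun t : ℝ => (1 - t ^ p) ^ (-(1 / p))) volume a b :=
  (intervalIntegrable_arcsinP_integrand hp).mono_set (by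
    rw [uIcc_of_le zero_le_one]
    exact uIcc_subset_Icc ha hb)

lemma arcsinP_zero (p : ℝ) : arcsinP p 0 = 0 := intervalIntegral.integral_same

lemma continuousOn_arcsinP (hp : 1 < p) : ContinuousOn (arcsinP p) (Icc 0 1) := by
  have := intervalIntegral.continuousOn_primitive_interval'
    (intervalIntegrable_arcsinP_integrand hp) left_mem_uIcc
  rwa [uIcc_of_le zero_le_one] at this

lemma strictMonoOn_arcsinP (hp : 1 < p) : StrictMonoOn (arcsinP p) (Icc 0 1) := by
  intro a ha b hb hab
  have hpos : 0 < ∫ t in a..b, (1 - t ^ p) ^ (-(1 / p)) := by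
    refine intervalIntegral.intervalIntegral_pos_of_pos_on
      (intervalIntegrable_arcsinP_integrand_of_mem hp ha hb) (fun t ht => ?_) hab
    have : t ^ p < 1 := rpow_lt_one (ha.1.trans ht.1.le) (ht.2.trans_le hb.2) (one_pos.trans hp)
    exact rpow_pos_of_pos (by linarith) _
  have hsplit := intervalIntegral.integral_add_adjacent_intervals
    (intervalIntegrable_arcsinP_integrand_of_mem hp (left_mem_Icc.2 zero_le_one) ha)
    (intervalIntegrable_arcsinP_integrand_of_mem hp ha hb)
  simp only [arcsinP] at hsplit ⊢
  linarith

lemma hasDerivAt_arcsinP (hp : 1 < p) {s : ℝ} (hs : s ∈ Ioo (0 : ℝ) 1) :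
    HasDerivAt (arcsinP p) ((1 - s ^ p) ^ (-(1 / p))) s := by
  have hsp : s ^ p < 1 := rpow_lt_one hs.1.le hs.2 (one_pos.trans hp)
  refine intervalIntegral.integral_hasDerivAt_right
    (intervalIntegrable_arcsinP_integrand_of_mem hp (left_mem_Icc.2 zero_le_one)
      (Ioo_subset_Icc_self hs))
    (measurable_arcsinP_integrand p).stronglyMeasurable.stronglyMeasurableAtFilter ?_
  exact (continuousAt_const.sub (continuousAt_rpow_const s p (Or.inl hs.1.ne'))).rpow_const
    (Or.inl (sub_pos.2 hsp).ne')

lemma bijOn_arcsinP (hp : 1 < p) : BijOn (arcsinP p) (Icc 0 1) (Icc 0 (arcsinP p 1)) := by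
  refine ⟨fun s hs => ?_, (strictMonoOn_arcsinP hp).injOn, ?_⟩
  · rw [← arcsinP_zero p]
    exact ⟨(strictMonoOn_arcsinP hp).monotoneOn (left_mem_Icc.2 zero_le_one) hs hs.1,
      (strictMonoOn_arcsinP hp).monotoneOn hs (right_mem_Icc.2 zero_le_one) hs.2⟩
  · have := intermediate_value_Icc zero_le_one (continuousOn_arcsinP hp)
    rwa [arcsinP_zero] at this

end arcsinP

section sinPHalf

variable {p : ℝ}

lemma invOn_sinPHalf (hp : 1 < p) :
    InvOn (sinPHalf p) (arcsinP p) (Icc 0 1) (Icc 0 (arcsinP p 1)) :=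
  (bijOn_arcsinP hp).invOn_invFunOn

lemma bijOn_sinPHalf (hp : 1 < p) : BijOn (sinPHalf p) (Icc 0 (arcsinP p 1)) (Icc 0 1) :=
  (bijOn_arcsinP hp).symm (invOn_sinPHalf hp).symm

lemma strictMonoOn_sinPHalf (hp : 1 < p) : StrictMonoOn (sinPHalf p) (Icc 0 (arcsinP p 1)) :=
  (strictMonoOn_arcsinP hp).strictMonoOn_of_rightInvOn (invOn_sinPHalf hp).2
    (bijOn_sinPHalf hp).mapsTo

lemma sinPHalf_zero (hp : 1 < p) : sinPHalf p 0 = 0 := by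
  simpa [arcsinP_zero] using (invOn_sinPHalf hp).1 (left_mem_Icc.2 zero_le_one)

lemma sinPHalf_arcsinP_one (hp : 1 < p) : sinPHalf p (arcsinP p 1) = 1 :=
  (invOn_sinPHalf hp).1 (right_mem_Icc.2 zero_le_one)

lemma sinPHalf_mem_Ioo (hp : 1 < p) {x : ℝ} (hx : x ∈ Ioo 0 (arcsinP p 1)) :
    sinPHalf p x ∈ Ioo (0 : ℝ) 1 := by
  have hA : 0 ≤ arcsinP p 1 := hx.1.le.trans hx.2.le
  constructor
  · simpa [sinPHalf_zero hp] using strictMonoOn_sinPHalf hp (left_mem_Icc.2 hA)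
      (Ioo_subset_Icc_self hx) hx.1
  · simpa [sinPHalf_arcsinP_one hp] using strictMonoOn_sinPHalf hp (Ioo_subset_Icc_self hx)
      (right_mem_Icc.2 hA) hx.2

lemma continuousAt_sinPHalf (hp : 1 < p) {x : ℝ} (hx : x ∈ Ioo 0 (arcsinP p 1)) :
    ContinuousAt (sinPHalf p) x := by
  have hx' := sinPHalf_mem_Ioo hp hx
  refine (strictMonoOn_sinPHalf hp).continuousAt_of_image_mem_nhds (Icc_mem_nhds hx.1 hx.2) ?_
  rw [(bijOn_sinPHalf hp).image_eq]
  exact Icc_mem_nhds hx'.1 hx'.2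

lemma hasDerivAt_sinPHalf (hp : 1 < p) {x : ℝ} (hx : x ∈ Ioo 0 (arcsinP p 1)) :
    HasDerivAt (sinPHalf p) ((1 - sinPHalf p x ^ p) ^ (1 / p)) x := by
  have hs := sinPHalf_mem_Ioo hp hx
  have hw : 0 < 1 - sinPHalf p x ^ p := by
    linarith [rpow_lt_one hs.1.le hs.2 (one_pos.trans hp)]
  have hleft : ∀ᶠ y in nhds x, arcsinP p (sinPHalf p y) = y := by
    filter_upwards [Ioo_mem_nhds hx.1 hx.2] with y hy
    exact (invOn_sinPHalf hp).2 (Ioo_subset_Icc_self hy)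
  simpa [rpow_neg hw.le] using (hasDerivAt_arcsinP hp hs).of_local_left_inverse
    (continuousAt_sinPHalf hp hx) (rpow_pos_of_pos hw _).ne' hleft

end sinPHalf

section sinP

variable {p x : ℝ}

lemma piP_div_two (p : ℝ) : piP p / 2 = arcsinP p 1 := by
  rw [piP]
  ring

lemma piP_div_two_pos (hp : 1 < p) : 0 < piP p / 2 := by
  simpa [piP_div_two, arcsinP_zero] using strictMonoOn_arcsinP hp (left_mem_Icc.2 zero_le_one)
    (right_mem_Icc.2 zero_le_one) one_pos

lemma sinP_of_le (hx : x ≤ piP p / 2) : sinP p x = sinPHalf p x := if_pos hx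

lemma cosP_of_le (hx : x ≤ piP p / 2) : cosP p x = (1 - sinP p x ^ p) ^ (1 / p) := if_pos hx

lemma sinP_mem_Ioo (hp : 1 < p) (hx : x ∈ Ioo 0 (piP p / 2)) : sinP p x ∈ Ioo (0 : ℝ) 1 := by
  rw [sinP_of_le hx.2.le]
  exact sinPHalf_mem_Ioo hp (piP_div_two p ▸ hx)

lemma cosP_pos (hp : 1 < p) (hx : x ∈ Ioo 0 (piP p / 2)) : 0 < cosP p x := by
  have hs := sinP_mem_Ioo hp hx
  rw [cosP_of_le hx.2.le]
  exact rpow_pos_of_pos (by linarith [rpow_lt_one hs.1.le hs.2 (one_pos.trans hp)]) _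

lemma hasDerivAt_sinP (hp : 1 < p) (hx : x ∈ Ioo 0 (piP p / 2)) :
    HasDerivAt (sinP p) (cosP p x) x := by
  have hnear : sinP p =ᶠ[nhds x] sinPHalf p := by
    filter_upwards [Iio_mem_nhds hx.2] with y hy
    exact sinP_of_le hy.le
  rw [cosP_of_le hx.2.le, sinP_of_le hx.2.le]
  exact (hasDerivAt_sinPHalf hp (piP_div_two p ▸ hx)).congr_of_eventuallyEq hnear

lemma hasDerivAt_cosP_rpow (hp : 1 < p) (hx : x ∈ Ioo 0 (piP p / 2)) :
    HasDerivAt (fun y => cosP p y ^ (p - 1)) (-((p - 1) * sinP p x ^ (p - 1))) x := by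
  have hs := sinP_mem_Ioo hp hx
  have hnear : (fun y => cosP p y ^ (p - 1)) =ᶠ[nhds x]
      fun y => (1 - sinP p y ^ p) ^ ((p - 1) / p) := by
    filter_upwards [Ioo_mem_nhds hx.1 hx.2] with y hy
    have hw : 0 ≤ 1 - sinP p y ^ p := by
      have hsy := sinP_mem_Ioo hp hy
      linarith [rpow_lt_one hsy.1.le hsy.2 (one_pos.trans hp)]
    rw [cosP_of_le hy.2.le, ← rpow_mul hw, one_div_mul_eq_div]
  have hsin := hasDerivAt_sinP hp hx
  rw [cosP_of_le hx.2.le] at hsin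
  exact (hsin.one_sub_rpow_rpow_div (one_pos.trans hp).ne' hs.1.ne'
    (rpow_lt_one hs.1.le hs.2 (one_pos.trans hp))).congr_of_eventuallyEq hnear

lemma hasDerivAt_abs_cosP_rpow_mul_cosP (hp : 1 < p) (hx : x ∈ Ioo 0 (piP p / 2)) :
    HasDerivAt (fun y => |cosP p y| ^ (p - 2) * cosP p y)
      (-((p - 1) * |sinP p x| ^ (p - 2) * sinP p x)) x := by
  have hnear : (fun y => |cosP p y| ^ (p - 2) * cosP p y) =ᶠ[nhds x]
      fun y => cosP p y ^ (p - 1) := by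
    filter_upwards [Ioo_mem_nhds hx.1 hx.2] with y hy
    exact abs_rpow_sub_two_mul_self (cosP_pos hp hy) p
  rw [mul_assoc, abs_rpow_sub_two_mul_self (sinP_mem_Ioo hp hx).1]
  exact (hasDerivAt_cosP_rpow hp hx).congr_of_eventuallyEq hnear

lemma sinP_zero (hp : 1 < p) : sinP p 0 = 0 := by
  rw [sinP_of_le (piP_div_two_pos hp).le, sinPHalf_zero hp]

lemma cosP_zero (hp : 1 < p) : cosP p 0 = 1 := by
  rw [cosP_of_le (piP_div_two_pos hp).le, sinP_zero hp, zero_rpow (one_pos.trans hp).ne',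
    sub_zero, one_rpow]

end sinP

/-- On `(0, π_p/2)`: `sin_p' = cos_p`, `((cos_p)^(p-1))' = -(p-1)(sin_p)^(p-1)`, hence
`u = sin_p` solves `(|u'|^(p-2)u')' + (p-1)|u|^(p-2)u = 0`; moreover `sin_p 0 = 0` and
`cos_p 0 = 1` (i.e. `sin_p'(0⁺) = 1`). -/
theorem sinP_ode (p : ℝ) (hp : 1 < p) :
    (∀ x ∈ Set.Ioo 0 (piP p / 2), HasDerivAt (sinP p) (cosP p x) x) ∧
    (∀ x ∈ Set.Ioo 0 (piP p / 2),
      HasDerivAt (fun y => cosP p y ^ (p - 1)) (-((p - 1) * sinP p x ^ (p - 1))) x) ∧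
    (∀ x ∈ Set.Ioo 0 (piP p / 2),
      HasDerivAt (fun y => |cosP p y| ^ (p - 2) * cosP p y)
        (-((p - 1) * |sinP p x| ^ (p - 2) * sinP p x)) x) ∧
    sinP p 0 = 0 ∧ cosP p 0 = 1 :=
  ⟨fun _ hx => hasDerivAt_sinP hp hx, fun _ hx => hasDerivAt_cosP_rpow hp hx,
    fun _ hx => hasDerivAt_abs_cosP_rpow_mul_cosP hp hx, sinP_zero hp, cosP_zero hp⟩
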